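/- arXiv:2311.16259 — 2 statements merged into one kernel-verified Lean document; each statement's English description precedes it below -/
import Mathlib

section
/- Let Γ be a group with commuting cyclic conjugates and let d ≥ 1. Then the d-th derived subgroup Γ^{(d)} has commuting cyclic conjugates. Key step: if H ≤ [Γ,Γ] is finitely generated, t ∈ Γ, n ∈ ℕ_{≥2} ∪ {∞} satisfy [H, t^p H t^{-p}] = 1 for 1 ≤ p < n and [H, t^n] = 1, and s ∈ Γ satisfies [⟨H,t⟩, s⟨H,t⟩s^{-1}] = 1, then c := [t,s] = t·(s t^{-1} s^{-1}) lies in [Γ,Γ] and satisfies c g c^{-1} = t g t^{-1} for all g ∈ ⟨H,t⟩, hence [H, c^p H c^{-p}] = 1 for all 1 ≤ p < n and [H, c^n] = 1. -/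
/-- A group `G` has *commuting cyclic conjugates* if for every finitely generated
subgroup `H ≤ G` there exist `t ∈ G` and `n ∈ ℕ_{≥2} ∪ {∞}` such that
`[H, t^p H t^{-p}] = 1` for all `1 ≤ p < n` and `[H, t^n] = 1` (reading `t^∞ = 1`). -/
def CommutingCyclicConjugates (G : Type*) [Group G] : Prop :=
  ∀ H : Subgroup G, H.FG → ∃ (t : G) (n : ℕ∞), 2 ≤ n ∧
    (∀ p : ℕ, 1 ≤ p → (p : ℕ∞) < n →
      ∀ h ∈ H, ∀ h' ∈ H, Commute h (t ^ p * h' * (t ^ p)⁻¹)) ∧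
    (∀ m : ℕ, (m : ℕ∞) = n → ∀ h ∈ H, Commute h (t ^ m))

/-!
Let `H ≤ [G, G]` be finitely generated with witness `(t, n)`. Applying the property once more, to
`⟨H, t⟩`, gives `s` such that `⟨H, t⟩` commutes with its `s`-conjugate; in particular
`s t⁻¹ s⁻¹` centralises `⟨H, t⟩`. Hence `⁅t, s⁆ = t · s t⁻¹ s⁻¹` acts on `⟨H, t⟩` by conjugation
exactly as `t` does, so `(⁅t, s⁆, n)` is again a witness for `H`, now lying in `[G, G]`.
This passes the property from `G` to `[G, G]`, and inductively down the derived series.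
-/

open scoped commutatorElement

section

open Subgroup

variable {G G' : Type*} [Group G] [Group G']

theorem Subgroup.FG.map {H : Subgroup G} (hH : H.FG) (f : G →* G') : (H.map f).FG := by
  classical
  obtain ⟨S, rfl⟩ := hH
  exact ⟨S.image f, by rw [Finset.coe_image, MonoidHom.map_closure]⟩

theorem Subgroup.fg_zpowers (t : G) : (zpowers t).FG :=
  ⟨{t}, by rw [Finset.coe_singleton, zpowers_eq_closure]⟩

theorem commutatorElement_mem_commutator (t s : G) : ⁅t, s⁆ ∈ commutator G := by
  rw [_root_.commutator_def]
  exact commutator_mem_commutator (mem_top t) (mem_top s)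

theorem commutatorElement_mul_mul_inv_eq_of_commute {g t s : G} (h : Commute g (s * t⁻¹ * s⁻¹)) :
    ⁅t, s⁆ * g * ⁅t, s⁆⁻¹ = t * g * t⁻¹ := by
  have hfix : (s * t⁻¹ * s⁻¹) * g * (s * t⁻¹ * s⁻¹)⁻¹ = g := h.symm.mul_inv_cancel
  calc ⁅t, s⁆ * g * ⁅t, s⁆⁻¹ = t * ((s * t⁻¹ * s⁻¹) * g * (s * t⁻¹ * s⁻¹)⁻¹) * t⁻¹ := by
        rw [commutatorElement_def]; group
    _ = t * g * t⁻¹ := by rw [hfix]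

theorem commutatorElement_mul_mul_inv_eq_of_forall_commute {K : Subgroup G} {t s : G} (ht : t ∈ K)
    (hs : ∀ g ∈ K, ∀ g' ∈ K, Commute g (s * g' * s⁻¹)) :
    ∀ g ∈ K, ⁅t, s⁆ * g * ⁅t, s⁆⁻¹ = t * g * t⁻¹ := fun g hg =>
  commutatorElement_mul_mul_inv_eq_of_commute (hs g hg t⁻¹ (K.inv_mem ht))

theorem pow_mul_mul_inv_pow_eq_of_forall_mul_mul_inv_eq {K : Subgroup G} {t c : G} (ht : t ∈ K)
    (hconj : ∀ g ∈ K, c * g * c⁻¹ = t * g * t⁻¹) (p : ℕ) :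
    ∀ g ∈ K, c ^ p * g * (c ^ p)⁻¹ = t ^ p * g * (t ^ p)⁻¹ := by
  induction p with
  | zero => simp
  | succ p ih =>
    intro g hg
    have hmem : t ^ p * g * (t ^ p)⁻¹ ∈ K :=
      K.mul_mem (K.mul_mem (K.pow_mem ht p) hg) (K.inv_mem (K.pow_mem ht p))
    calc c ^ (p + 1) * g * (c ^ (p + 1))⁻¹ = c * (c ^ p * g * (c ^ p)⁻¹) * c⁻¹ := by group
      _ = t * (t ^ p * g * (t ^ p)⁻¹) * t⁻¹ := by rw [ih g hg, hconj _ hmem]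
      _ = t ^ (p + 1) * g * (t ^ (p + 1))⁻¹ := by group

def CyclicConjugatesCommute (H : Subgroup G) (t : G) (n : ℕ∞) : Prop :=
  (∀ p : ℕ, 1 ≤ p → (p : ℕ∞) < n → ∀ h ∈ H, ∀ h' ∈ H, Commute h (t ^ p * h' * (t ^ p)⁻¹)) ∧
    (∀ m : ℕ, (m : ℕ∞) = n → ∀ h ∈ H, Commute h (t ^ m))

namespace CyclicConjugatesCommute

variable {H K : Subgroup G} {t c : G} {n : ℕ∞}

theorem of_forall_mul_mul_inv_eq (h : CyclicConjugatesCommute H t n) (hHK : H ≤ K) (ht : t ∈ K)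
    (hconj : ∀ g ∈ K, c * g * c⁻¹ = t * g * t⁻¹) : CyclicConjugatesCommute H c n := by
  have hpow := pow_mul_mul_inv_pow_eq_of_forall_mul_mul_inv_eq ht hconj
  refine ⟨fun p hp hpn x hx y hy => ?_, fun m hm x hx => ?_⟩
  · rw [hpow p y (hHK hy)]
    exact h.1 p hp hpn x hx y hy
  · have : c ^ m * x * (c ^ m)⁻¹ = x := by
      rw [hpow m x (hHK hx)]
      exact (h.2 m hm x hx).symm.mul_inv_cancel
    exact (mul_inv_eq_iff_eq_mul.mp this).symm

theorem of_map {f : G →* G'} (hf : Function.Injective f) {k : G}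
    (h : CyclicConjugatesCommute (H.map f) (f k) n) : CyclicConjugatesCommute H k n := by
  refine ⟨fun p hp hpn x hx y hy => ?_, fun m hm x hx => ?_⟩
  · refine Commute.of_map hf ?_
    simpa using h.1 p hp hpn (f x) (mem_map_of_mem f hx) (f y) (mem_map_of_mem f hy)
  · refine Commute.of_map hf ?_
    simpa using h.2 m hm (f x) (mem_map_of_mem f hx)

theorem commutatorElement (h : CyclicConjugatesCommute H t n) {s : G}
    (hs : ∀ g ∈ H ⊔ zpowers t, ∀ g' ∈ H ⊔ zpowers t, Commute g (s * g' * s⁻¹)) :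
    CyclicConjugatesCommute H ⁅t, s⁆ n :=
  have ht : t ∈ H ⊔ zpowers t := mem_sup_right (mem_zpowers t)
  h.of_forall_mul_mul_inv_eq le_sup_left ht
    (commutatorElement_mul_mul_inv_eq_of_forall_commute ht hs)

end CyclicConjugatesCommute

theorem CommutingCyclicConjugates.of_commutator_le_range (hG : CommutingCyclicConjugates G)
    (f : G' →* G) (hf : Function.Injective f) (hrange : commutator G ≤ f.range) :
    CommutingCyclicConjugates G' := by
  intro H hH
  obtain ⟨t, n, hn, ht⟩ := hG (H.map f) (hH.map f)
  obtain ⟨s, n', hn', hs, -⟩ := hG _ ((hH.map f).sup (fg_zpowers t))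
  obtain ⟨k, hk⟩ := hrange (commutatorElement_mem_commutator t s)
  refine ⟨k, n, hn, CyclicConjugatesCommute.of_map hf ?_⟩
  rw [hk]
  refine CyclicConjugatesCommute.commutatorElement ht fun g hg g' hg' => ?_
  have hone : (1 : ℕ∞) < n' := lt_of_lt_of_le (by norm_num) hn'
  simpa using hs 1 le_rfl hone g hg g' hg'

theorem CommutingCyclicConjugates.derivedSeries (hG : CommutingCyclicConjugates G) (d : ℕ) :
    CommutingCyclicConjugates (_root_.derivedSeries G d) := by
  induction d with
  | zero =>
    exact hG.of_commutator_le_range _ (subtype_injective _) (by rw [range_subtype]; exact le_top)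
  | succ d ih =>
    refine ih.of_commutator_le_range (inclusion (derivedSeries_antitone G d.le_succ))
      (inclusion_injective _) fun x hx => ?_
    rw [inclusion_range, mem_subgroupOf, derivedSeries_succ, ← map_subtype_commutator]
    exact mem_map_of_mem _ hx

end

/-- If `Γ` has commuting cyclic conjugates, then so does every derived subgroup
`Γ^{(d)}`, `d ≥ 1`.  Moreover (key step, which holds in any group): if
`H ≤ [Γ,Γ]` is finitely generated, `t ∈ Γ`, `n ∈ ℕ_{≥2} ∪ {∞}` satisfy
`[H, t^p H t^{-p}] = 1` for `1 ≤ p < n` and `[H, t^n] = 1`, and `s ∈ Γ` satisfies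
`[⟨H,t⟩, s ⟨H,t⟩ s⁻¹] = 1`, then `c := [t,s] = t·(s t⁻¹ s⁻¹)` lies in `[Γ,Γ]`,
satisfies `c g c⁻¹ = t g t⁻¹` for all `g ∈ ⟨H,t⟩`, and hence
`[H, c^p H c^{-p}] = 1` for `1 ≤ p < n` and `[H, c^n] = 1`. -/
theorem derivedSeries_commutingCyclicConjugates {Γ : Type*} [Group Γ]
    (hΓ : CommutingCyclicConjugates Γ) :
    (∀ d : ℕ, 1 ≤ d → CommutingCyclicConjugates ↥(derivedSeries Γ d)) ∧
    (∀ (H : Subgroup Γ) (t s : Γ) (n : ℕ∞),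
      H ≤ commutator Γ → H.FG → 2 ≤ n →
      (∀ p : ℕ, 1 ≤ p → (p : ℕ∞) < n →
        ∀ h ∈ H, ∀ h' ∈ H, Commute h (t ^ p * h' * (t ^ p)⁻¹)) →
      (∀ m : ℕ, (m : ℕ∞) = n → ∀ h ∈ H, Commute h (t ^ m)) →
      (∀ g ∈ (H ⊔ Subgroup.zpowers t : Subgroup Γ),
        ∀ g' ∈ (H ⊔ Subgroup.zpowers t : Subgroup Γ), Commute g (s * g' * s⁻¹)) →
      (t * (s * t⁻¹ * s⁻¹)) ∈ commutator Γ ∧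
      (∀ g ∈ (H ⊔ Subgroup.zpowers t : Subgroup Γ),
        (t * (s * t⁻¹ * s⁻¹)) * g * (t * (s * t⁻¹ * s⁻¹))⁻¹ = t * g * t⁻¹) ∧
      (∀ p : ℕ, 1 ≤ p → (p : ℕ∞) < n →
        ∀ h ∈ H, ∀ h' ∈ H,
          Commute h ((t * (s * t⁻¹ * s⁻¹)) ^ p * h' * ((t * (s * t⁻¹ * s⁻¹)) ^ p)⁻¹)) ∧
      (∀ m : ℕ, (m : ℕ∞) = n →
        ∀ h ∈ H, Commute h ((t * (s * t⁻¹ * s⁻¹)) ^ m))) := by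
  refine ⟨fun d _ => hΓ.derivedSeries d, fun H t s n _ _ _ hcomm hpow hs => ?_⟩
  have ht : t ∈ H ⊔ Subgroup.zpowers t := Subgroup.mem_sup_right (Subgroup.mem_zpowers t)
  have hc : t * (s * t⁻¹ * s⁻¹) = ⁅t, s⁆ := by rw [commutatorElement_def]; group
  rw [hc]
  exact ⟨commutatorElement_mem_commutator t s,
    commutatorElement_mul_mul_inv_eq_of_forall_commute ht hs,
    CyclicConjugatesCommute.commutatorElement ⟨hcomm, hpow⟩ hs⟩
end

section
/- Let X be a topological space and T a group of compactly supported homeomorphisms of X. Suppose that for every compact subset K ⊂ X there exists t ∈ T such that t(K) ∩ K = ∅ and t^2 restricted to K is the identity, and moreover supp(H) ⊂ K implies the support of any h ∈ H is contained in K. Then every group G with T ≤ G ≤ Homeo_c(X) has commuting cyclic conjugates (with n = 2 in the definition). -/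
/-!
A finitely generated group of compactly supported homeomorphisms is supported in a compact
set `K`, the union of the closed supports of its generators. If `t` displaces `K` and `t²` is
the identity on `K`, then `t H t⁻¹` is supported in `t K`, which misses `K`, and `t²` is
supported in the complement of `K`; homeomorphisms with disjoint supports commute.
-/

/-- The group of self-homeomorphisms of `X`, with composition as multiplication. -/
instance homeoGroup (X : Type*) [TopologicalSpace X] : Group (X ≃ₜ X) where
  mul f g := g.trans f
  one := Homeomorph.refl X
  inv := Homeomorph.symm
  mul_assoc _ _ _ := rfl
  one_mul _ := rfl
  mul_one _ := rfl
  inv_mul_cancel a := Homeomorph.ext fun x => a.symm_apply_apply x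

namespace Homeomorph

variable {X : Type*} [TopologicalSpace X]

def support (f : X ≃ₜ X) : Set X := {x | f x ≠ x}

theorem notMem_support {f : X ≃ₜ X} {x : X} : x ∉ f.support ↔ f x = x := not_not

theorem apply_mem_support_iff (f : X ≃ₜ X) {x : X} : f x ∈ f.support ↔ x ∈ f.support :=
  f.injective.ne_iff

theorem support_inv (f : X ≃ₜ X) : f⁻¹.support = f.support := by
  ext x
  exact not_congr (f.symm_apply_eq.trans eq_comm)

theorem support_mul_subset (f g : X ≃ₜ X) : (f * g).support ⊆ f.support ∪ g.support := by
  intro x hx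
  by_contra h
  rw [Set.mem_union, not_or, notMem_support, notMem_support] at h
  exact hx (show f (g x) = x by rw [h.2, h.1])

theorem support_conj (t f : X ≃ₜ X) : (t * f * t⁻¹).support = t '' f.support := by
  ext x
  rw [t.image_eq_preimage_symm]
  exact not_congr t.toEquiv.eq_symm_apply.symm

def supportedIn (K : Set X) : Subgroup (X ≃ₜ X) where
  carrier := {f | f.support ⊆ K}
  one_mem' := fun _ hx => absurd rfl hx
  mul_mem' := fun hf hg => (support_mul_subset _ _).trans (Set.union_subset hf hg)
  inv_mem' := fun hf => (support_inv _).trans_subset hf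

theorem commute_of_disjoint_support {f g : X ≃ₜ X} (h : Disjoint f.support g.support) :
    Commute f g := by
  have key : ∀ {f g : X ≃ₜ X}, Disjoint f.support g.support →
      ∀ x ∉ g.support, f (g x) = g (f x) := by
    intro f g h x hx
    have hfx : f x ∉ g.support := by
      by_cases hxf : x ∈ f.support
      · exact h.notMem_of_mem_left ((apply_mem_support_iff f).2 hxf)
      · rwa [notMem_support.1 hxf]
    rw [notMem_support.1 hx, notMem_support.1 hfx]
  ext x
  by_cases hx : x ∈ g.support
  · exact (key h.symm x (h.notMem_of_mem_right hx)).symm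
  · exact key h x hx

theorem commute_of_support_subset_of_apply_eq_self {K : Set X} {f s : X ≃ₜ X} (hf : f.support ⊆ K)
    (hs : ∀ x ∈ K, s x = x) : Commute f s :=
  commute_of_disjoint_support (Set.disjoint_left.2 fun x hx hxs => hxs (hs x (hf hx)))

theorem commute_conj_of_disjoint_image {K : Set X} {f g t : X ≃ₜ X} (hf : f.support ⊆ K)
    (hg : g.support ⊆ K) (ht : Disjoint (t '' K) K) : Commute f (t * g * t⁻¹) :=
  commute_of_disjoint_support <| by
    rw [support_conj]
    exact (ht.mono (Set.image_mono hg) hf).symm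

theorem exists_isCompact_le_comap_supportedIn {Γ : Type*} [Group Γ] (φ : Γ →* (X ≃ₜ X))
    (hφ : ∀ g, IsCompact (closure (φ g).support)) {H : Subgroup Γ} (hH : H.FG) :
    ∃ K, IsCompact K ∧ H ≤ (supportedIn K).comap φ := by
  obtain ⟨S, rfl⟩ := hH
  refine ⟨⋃ g ∈ S, closure (φ g).support, S.isCompact_biUnion fun g _ => hφ g, ?_⟩
  rw [Subgroup.closure_le]
  intro g hg
  exact subset_closure.trans (Set.subset_biUnion_of_mem (u := fun g => closure (φ g).support) hg)

end Homeomorph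

theorem commutingCyclicConjugates_of_displacement_general {X : Type*} [TopologicalSpace X]
    (T G : Subgroup (X ≃ₜ X))
    (hG : ∀ f ∈ G, IsCompact (closure {x | f x ≠ x}))
    (hTG : T ≤ G)
    (hdisp : ∀ K : Set X, IsCompact K → ∃ t ∈ T,
      Disjoint ((t : X ≃ₜ X) '' K) K ∧ ∀ x ∈ K, t (t x) = x) :
    CommutingCyclicConjugates ↥G := by
  intro H hH
  obtain ⟨K, hK, hHK⟩ :=
    Homeomorph.exists_isCompact_le_comap_supportedIn G.subtype (fun f => hG f f.2) hH
  obtain ⟨t, htT, hdisj, hinv⟩ := hdisp K hK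
  refine ⟨⟨t, hTG htT⟩, 2, le_rfl, fun p hp1 hp2 h hh h' hh' => ?_, fun m hm h hh => ?_⟩
  · obtain rfl : p = 1 := by
      have : p < 2 := by exact_mod_cast hp2
      omega
    rw [← Submonoid.commute_coe_coe]
    simpa using Homeomorph.commute_conj_of_disjoint_image (hHK hh) (hHK hh') hdisj
  · obtain rfl : m = 2 := by exact_mod_cast hm
    rw [← Submonoid.commute_coe_coe]
    exact Homeomorph.commute_of_support_subset_of_apply_eq_self (hHK hh) hinv

/-- Let `T` be a group of compactly supported homeomorphisms of `X` such that every
compact set `K ⊆ X` admits `t ∈ T` with `t(K) ∩ K = ∅` and `t² = id` on `K`.  Then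
every group `G` of compactly supported homeomorphisms with `T ≤ G` has commuting
cyclic conjugates (with `n = 2` in the definition). -/
theorem commutingCyclicConjugates_of_displacement {X : Type*} [TopologicalSpace X]
    (T G : Subgroup (X ≃ₜ X))
    (hT : ∀ f ∈ T, IsCompact (closure {x | f x ≠ x}))
    (hG : ∀ f ∈ G, IsCompact (closure {x | f x ≠ x}))
    (hTG : T ≤ G)
    (hdisp : ∀ K : Set X, IsCompact K → ∃ t ∈ T,
      Disjoint ((t : X ≃ₜ X) '' K) K ∧ ∀ x ∈ K, t (t x) = x) :
    CommutingCyclicConjugates ↥G :=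
  commutingCyclicConjugates_of_displacement_general T G hG hTG hdisp
end
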